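/- arXiv:2104.14489 — 3 statements merged into one kernel-verified Lean document; each statement's English description precedes it below -/
import Mathlib

section
/- Let I be an interval of ℝ containing 0 and let f : I → ℝ be a differentiable non-negative function. Assume there is C > 0 such that |f'| ≤ C √f on I. Then for all x ∈ I, |√(f(x)) − √(f(0))| ≤ (C/2)|x|. -/
/-!
Where `f` vanishes, `√f` need not be differentiable, so work with `√(f + δ)` for `δ > 0`:
its derivative `f' / (2 √(f + δ))` is bounded by `C / 2`, so the mean value inequality makes it
`C / 2`-Lipschitz on `I`, and the bound survives the limit `δ → 0⁺`.
-/

open Filter Topology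

theorem abs_div_two_mul_sqrt_add_le {a d C δ : ℝ} (ha : 0 ≤ a) (hδ : 0 < δ) (hC : 0 ≤ C)
    (hd : |d| ≤ C * √a) : |d / (2 * √(a + δ))| ≤ C / 2 := by
  have hpos : 0 < √(a + δ) := Real.sqrt_pos.mpr (by linarith)
  have hmono : √a ≤ √(a + δ) := Real.sqrt_le_sqrt (by linarith)
  rw [abs_div, abs_of_pos (by positivity : 0 < 2 * √(a + δ)), div_le_iff₀ (by positivity)]
  calc |d| ≤ C * √a := hd
    _ ≤ C * √(a + δ) := by gcongr
    _ = C / 2 * (2 * √(a + δ)) := by ring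

section

variable {s : Set ℝ} {f f' : ℝ → ℝ} {C : ℝ}

theorem Convex.abs_sqrt_add_sub_sqrt_add_le (hs : Convex ℝ s)
    (hf : ∀ x ∈ s, HasDerivWithinAt f (f' x) s x) (hnn : ∀ x ∈ s, 0 ≤ f x) (hC : 0 ≤ C)
    (hder : ∀ x ∈ s, |f' x| ≤ C * √(f x)) {δ : ℝ} (hδ : 0 < δ) {x y : ℝ} (hx : x ∈ s)
    (hy : y ∈ s) : |√(f x + δ) - √(f y + δ)| ≤ C / 2 * |x - y| := by
  have hderiv : ∀ t ∈ s,
      HasDerivWithinAt (fun u => √(f u + δ)) (f' t / (2 * √(f t + δ))) s t := fun t ht =>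
    ((hf t ht).add_const δ).sqrt (by linarith [hnn t ht])
  have hbound : ∀ t ∈ s, ‖f' t / (2 * √(f t + δ))‖ ≤ C / 2 := fun t ht =>
    abs_div_two_mul_sqrt_add_le (hnn t ht) hδ hC (hder t ht)
  simpa only [Real.norm_eq_abs] using
    hs.norm_image_sub_le_of_norm_hasDerivWithin_le hderiv hbound hy hx

theorem Convex.abs_sqrt_sub_sqrt_le (hs : Convex ℝ s)
    (hf : ∀ x ∈ s, HasDerivWithinAt f (f' x) s x) (hnn : ∀ x ∈ s, 0 ≤ f x) (hC : 0 ≤ C)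
    (hder : ∀ x ∈ s, |f' x| ≤ C * √(f x)) {x y : ℝ} (hx : x ∈ s) (hy : y ∈ s) :
    |√(f x) - √(f y)| ≤ C / 2 * |x - y| := by
  have hlim : Tendsto (fun δ => |√(f x + δ) - √(f y + δ)|) (𝓝[>] 0)
      (𝓝 |√(f x) - √(f y)|) := by
    have hcont : Continuous fun δ => |√(f x + δ) - √(f y + δ)| := by fun_prop
    simpa only [add_zero] using (hcont.tendsto 0).mono_left nhdsWithin_le_nhds
  exact le_of_tendsto hlim <| eventually_nhdsWithin_of_forall fun δ hδ =>
    hs.abs_sqrt_add_sub_sqrt_add_le hf hnn hC hder hδ hx hy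

end

/-- If `f` is a differentiable non-negative function on an interval `I` containing `0`
with `|f'| ≤ C √f` on `I` for some `C > 0`, then
`|√(f x) − √(f 0)| ≤ (C/2) |x|` for all `x ∈ I`. -/
theorem stmt_0 (I : Set ℝ) (hI : I.OrdConnected) (h0 : (0:ℝ) ∈ I)
    (f : ℝ → ℝ) (hf : ∀ x ∈ I, DifferentiableAt ℝ f x)
    (hnn : ∀ x ∈ I, 0 ≤ f x) (C : ℝ) (hC : 0 < C)
    (hder : ∀ x ∈ I, |deriv f x| ≤ C * Real.sqrt (f x)) :
    ∀ x ∈ I, |Real.sqrt (f x) - Real.sqrt (f 0)| ≤ C / 2 * |x| := by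
  intro x hx
  simpa only [sub_zero] using hI.convex.abs_sqrt_sub_sqrt_le
    (fun t ht => (hf t ht).hasDerivAt.hasDerivWithinAt) hnn hC.le hder hx h0
end

section
/- Let S be the self-adjoint operator on L²(0,ε) associated with the quadratic form s[f] = ∫₀^ε |f'|² dt − α|f(0)|², on the domain {f ∈ H¹(0,ε) : f(ε) = 0}, with α > 0. Then as α → +∞, the lowest eigenvalue satisfies E₁(S) = −α² + O(e^{−εα}); in particular there exist α₀, K > 0 such that |E₁(S) + α²| ≤ K e^{−εα} for α ≥ α₀. -/
/-!
An eigenvalue below `-α²` would be `-m²` with `m > |α|`; then `f = A e^{mx} + B e^{-mx}`, and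
the Robin condition makes `f ε` a positive multiple of `f 0`, forcing `f = 0`. Conversely
`sinh (k (ε - x))` is an eigenfunction for `-k²` as soon as `α sinh (kε) = k cosh (kε)`, and the
intermediate value theorem gives such a `k ∈ [3α/4, α]` once `αε ≥ 4`. From that equation,
`α² - k² = α² / cosh² (kε) ≤ 4 α² e^{-2kε} ≤ 4 α² e^{-3αε/2}`, and `α² e^{-αε/2}` is bounded by
`8 / ε²`.
-/

/-- `lam` is an eigenvalue of the operator `S = −d²/dx²` on `(0, ε)` with Robin boundary
condition `f'(0) + α f(0) = 0` at `0` and Dirichlet condition `f(ε) = 0`, i.e. the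
self-adjoint operator associated with the quadratic form
`s[f] = ∫₀^ε |f'|² − α |f(0)|²` on `{f ∈ H¹(0,ε) : f(ε) = 0}`. -/
def IsRDEigen (ε α lam : ℝ) : Prop :=
  ∃ f : ℝ → ℝ, ContDiff ℝ 2 f ∧ (∃ x ∈ Set.Icc 0 ε, f x ≠ 0) ∧
    (∀ x, deriv (deriv f) x = - lam * f x) ∧
    deriv f 0 + α * f 0 = 0 ∧ f ε = 0

open Real Set

theorem eq_mul_exp_of_hasDerivAt_mul {h : ℝ → ℝ} {c : ℝ} (hd : ∀ x, HasDerivAt h (c * h x) x)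
    (x : ℝ) : h x = h 0 * exp (c * x) := by
  have hconst : ∀ y, HasDerivAt (fun y => h y * exp (-(c * y))) 0 y := fun y =>
    ((hd y).mul (((hasDerivAt_id y).const_mul c).neg.exp)).congr_deriv (by simp; ring)
  have hx := is_const_of_deriv_eq_zero (fun y => (hconst y).differentiableAt)
    (fun y => (hconst y).deriv) x 0
  calc h x = h x * exp (-(c * x)) * exp (c * x) := by rw [mul_assoc, ← exp_add]; simp
    _ = h 0 * exp (c * x) := by simp [hx]

/-- Multiplied through by `2 m`, so that no division by `m` occurs. -/
theorem two_mul_mul_eq_of_deriv_deriv_eq {f : ℝ → ℝ} {m : ℝ} (hf : ContDiff ℝ 2 f)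
    (hode : ∀ x, deriv (deriv f) x = m ^ 2 * f x) (x : ℝ) :
    2 * m * f x = (deriv f 0 + m * f 0) * exp (m * x) - (deriv f 0 - m * f 0) * exp (-m * x) := by
  have hf' : ∀ y, HasDerivAt f (deriv f y) y :=
    fun y => (hf.differentiable (by norm_num) y).hasDerivAt
  have hf'' : ∀ y, HasDerivAt (deriv f) (m ^ 2 * f y) y := fun y => by
    rw [← hode]
    exact ((hf.iterate_deriv' 1 1).differentiable one_ne_zero y).hasDerivAt
  have hplus := eq_mul_exp_of_hasDerivAt_mul (h := fun y => deriv f y + m * f y) (c := m)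
    (fun y => ((hf'' y).add ((hf' y).const_mul m)).congr_deriv (by ring)) x
  have hminus := eq_mul_exp_of_hasDerivAt_mul (h := fun y => deriv f y - m * f y) (c := -m)
    (fun y => ((hf'' y).sub ((hf' y).const_mul m)).congr_deriv (by ring)) x
  linear_combination hplus - hminus

theorem IsRDEigen.neg_sq_le {ε α lam : ℝ} (h : IsRDEigen ε α lam) : -α ^ 2 ≤ lam := by
  obtain ⟨f, hf, ⟨x₀, -, hfx₀⟩, hode, hrobin, hdir⟩ := h
  by_contra! hlt
  set m := √(-lam)
  have hm2 : m ^ 2 = -lam := sq_sqrt (by nlinarith [sq_nonneg α])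
  have hαm : |α| < m := by
    rw [← sqrt_sq_eq_abs]
    exact sqrt_lt_sqrt (sq_nonneg α) (by linarith)
  obtain ⟨hαm₁, hαm₂⟩ := abs_lt.1 hαm
  have hsol := two_mul_mul_eq_of_deriv_deriv_eq hf (m := m) (fun x => by rw [hode, hm2])
  have hf'0 : deriv f 0 = -α * f 0 := by linarith
  -- with `m > |α|`, the Robin condition makes the solution at `ε` a positive multiple of `f 0`
  have hf0 : f 0 = 0 := by
    have hpos : 0 < (m - α) * exp (m * ε) + (m + α) * exp (-m * ε) := by
      have := exp_pos (m * ε); have := exp_pos (-m * ε)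
      nlinarith
    have hε := hsol ε
    rw [hdir, hf'0] at hε
    refine (mul_eq_zero.1 (?_ : f 0 * _ = 0)).resolve_right hpos.ne'
    linear_combination -hε
  have hx₀ := hsol x₀
  rw [hf'0, hf0] at hx₀
  exact hfx₀ (by nlinarith)

theorem isRDEigen_neg_sq_of_mul_sinh_eq {ε α k : ℝ} (hε : 0 < ε) (hk : k ≠ 0)
    (heq : α * sinh (k * ε) = k * cosh (k * ε)) : IsRDEigen ε α (-k ^ 2) := by
  have hd : ∀ x, HasDerivAt (fun y => sinh (k * (ε - y))) (-k * cosh (k * (ε - x))) x :=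
    fun x => (((hasDerivAt_id x).const_sub ε).const_mul k).sinh.congr_deriv (by simp; ring)
  have hd2 : ∀ x, HasDerivAt (fun y => -k * cosh (k * (ε - y))) (k ^ 2 * sinh (k * (ε - x))) x :=
    fun x => ((((hasDerivAt_id x).const_sub ε).const_mul k).cosh.const_mul (-k)).congr_deriv
      (by simp; ring)
  have hderiv : deriv (fun y => sinh (k * (ε - y))) = fun x => -k * cosh (k * (ε - x)) :=
    funext fun x => (hd x).deriv
  refine ⟨fun y => sinh (k * (ε - y)), by fun_prop, ⟨0, ⟨le_rfl, hε.le⟩, ?_⟩, fun x => ?_, ?_,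
    by simp⟩
  · simpa [sinh_eq_zero] using ⟨hk, hε.ne'⟩
  · rw [hderiv, (hd2 x).deriv]
    ring
  · rw [hderiv]
    simp only [sub_zero]
    linarith

theorem exists_mul_sinh_eq_mul_cosh {ε α : ℝ} (hα : 0 ≤ α) (hαε : 4 ≤ α * ε) :
    ∃ k ∈ Icc (3 / 4 * α) α, α * sinh (k * ε) = k * cosh (k * ε) := by
  have hcont :
      ContinuousOn (fun k => α * sinh (k * ε) - k * cosh (k * ε)) (Icc (3 / 4 * α) α) := by
    fun_prop
  have hright : α * sinh (α * ε) - α * cosh (α * ε) ≤ 0 := by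
    rw [← mul_sub, ← neg_sub, cosh_sub_sinh]
    have := exp_pos (-(α * ε))
    nlinarith
  have hleft : 0 ≤ α * sinh (3 / 4 * α * ε) - 3 / 4 * α * cosh (3 / 4 * α * ε) := by
    set t := 3 / 4 * α * ε
    have ht : 3 ≤ t := by linarith [show t = 3 / 4 * (α * ε) by ring]
    have h7 : 7 * exp (-t) ≤ exp t := by
      have : 7 ≤ exp t * exp t := by rw [← exp_add]; linarith [add_one_le_exp (t + t)]
      have : exp t * exp (-t) = 1 := by rw [← exp_add]; simp
      nlinarith [exp_pos t]
    rw [sinh_eq, cosh_eq]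
    nlinarith [mul_nonneg hα (sub_nonneg.2 h7)]
  obtain ⟨k, hk, hk0⟩ := intermediate_value_Icc' (by linarith) hcont ⟨hright, hleft⟩
  exact ⟨k, hk, by linarith [hk0]⟩

theorem sq_sub_sq_mul_exp_sq_le_of_mul_sinh_eq {α k t : ℝ} (heq : α * sinh t = k * cosh t) :
    (α ^ 2 - k ^ 2) * exp t ^ 2 ≤ 4 * α ^ 2 := by
  have hcosh : (α ^ 2 - k ^ 2) * cosh t ^ 2 = α ^ 2 := by
    linear_combination (α * sinh t + k * cosh t) * heq + α ^ 2 * cosh_sq t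
  have hexp : exp t ≤ 2 * cosh t := by rw [cosh_eq]; linarith [exp_pos (-t)]
  have hnonneg : 0 ≤ α ^ 2 - k ^ 2 := by
    by_contra! hneg
    nlinarith [pow_pos (cosh_pos t) 2, sq_nonneg α]
  nlinarith [mul_le_mul_of_nonneg_left (pow_le_pow_left₀ (exp_pos t).le hexp 2) hnonneg]

theorem sq_le_mul_exp_half {x : ℝ} (hx : 0 ≤ x) : x ^ 2 ≤ 8 * exp (x / 2) := by
  nlinarith [quadratic_le_exp_of_nonneg (by positivity : 0 ≤ x / 2)]

theorem sq_sub_sq_le_mul_exp_neg {ε α k : ℝ} (hε : 0 < ε) (hα : 0 ≤ α) (hk : 3 / 4 * α ≤ k)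
    (heq : α * sinh (k * ε) = k * cosh (k * ε)) :
    α ^ 2 - k ^ 2 ≤ 32 / ε ^ 2 * exp (-ε * α) := by
  have hgap := sq_sub_sq_mul_exp_sq_le_of_mul_sinh_eq heq
  have hexp : exp (ε * α) * exp (α * ε / 2) ≤ exp (k * ε) ^ 2 := by
    rw [← exp_add, sq, ← exp_add]
    exact exp_le_exp.2 (by nlinarith)
  have hpoly := sq_le_mul_exp_half (mul_nonneg hα hε.le)
  rw [neg_mul, exp_neg, ← div_eq_mul_inv, le_div_iff₀ (exp_pos _), le_div_iff₀ (by positivity)]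
  rcases le_or_gt (α ^ 2 - k ^ 2) 0 with hle | hpos
  · nlinarith [mul_nonneg (exp_pos (ε * α)).le (sq_nonneg ε)]
  · have := exp_pos (α * ε / 2)
    nlinarith [mul_le_mul_of_nonneg_left hexp hpos.le]

/-- As `α → +∞`, the lowest eigenvalue of `S` satisfies `E₁(S) = −α² + O(e^{−εα})`:
there are `α₀, K > 0` such that `|E₁(S) + α²| ≤ K e^{−εα}` for all `α ≥ α₀`. -/
theorem stmt_5 (ε : ℝ) (hε : 0 < ε) :
    ∃ α₀ K : ℝ, 0 < α₀ ∧ 0 < K ∧ ∀ α ≥ α₀,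
      |sInf {lam | IsRDEigen ε α lam} + α ^ 2| ≤ K * Real.exp (-ε * α) := by
  refine ⟨4 / ε, 32 / ε ^ 2, by positivity, by positivity, fun α hα => ?_⟩
  have hα₀ : 0 ≤ α := le_trans (by positivity) hα
  have hαε : 4 ≤ α * ε := (div_le_iff₀ hε).1 hα
  obtain ⟨k, ⟨hk, -⟩, heq⟩ := exists_mul_sinh_eq_mul_cosh hα₀ hαε
  have hk₀ : 0 < k := by nlinarith
  have heigen := isRDEigen_neg_sq_of_mul_sinh_eq hε hk₀.ne' heq
  have hlower : ∀ lam ∈ {lam | IsRDEigen ε α lam}, -α ^ 2 ≤ lam := fun _ h => h.neg_sq_le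
  have hinf_ge : -α ^ 2 ≤ sInf {lam | IsRDEigen ε α lam} := le_csInf ⟨_, heigen⟩ hlower
  have hinf_le : sInf {lam | IsRDEigen ε α lam} ≤ -k ^ 2 := csInf_le ⟨_, hlower⟩ heigen
  rw [abs_of_nonneg (by linarith)]
  linarith [sq_sub_sq_le_mul_exp_neg hε hα₀ hk heq]
end

section
/- With S as above (Robin–Dirichlet Laplacian on (0,ε) with Robin parameter −α at 0), the L²-normalized eigenfunction f associated with the first eigenvalue satisfies |f(0)|² = 2α + O(1) as α → +∞. -/
/-!
For `α ≥ 4 / ε` the equation `k cosh (k ε) = α sinh (k ε)` has a root `k ≥ 2 / ε`, and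
`sinh (k (ε - x))` is an eigenfunction with eigenvalue `-k²`; so the infimum of the eigenvalues
is `-μ²` with `μ ≥ k`. (If the eigenvalues were unbounded below, `sInf` would be the junk value
`0`, and then the boundary problem has only the zero solution, contradicting the normalization.)
A solution of `f'' = μ² f` vanishing at `ε` is `f(0) sinh (μ (ε - x)) / sinh (μ ε)`; the Robin
condition then says `μ cosh (μ ε) = α sinh (μ ε)`, and the normalization computes `f(0)²`.
With `t = μ ε ≥ 2`, eliminating `α` gives
`ε (f(0)² - 2α) = 2t (t cosh t - sinh t) / (sinh t (sinh t cosh t - t)) ∈ [0, 4]`.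
-/

open Real

theorem eq_mul_exp_of_deriv_eq_mul {g : ℝ → ℝ} {c : ℝ} (hg : Differentiable ℝ g)
    (hderiv : ∀ x, deriv g x = c * g x) (x : ℝ) : g x = g 0 * exp (c * x) := by
  have hconst : ∀ y, HasDerivAt (fun y => g y * exp (-(c * y))) 0 y := fun y => by
    have := (hg y).hasDerivAt.fun_mul ((hasDerivAt_id y).const_mul c).fun_neg.exp
    simp only [id, mul_one, hderiv] at this
    exact this.congr_deriv (by ring)
  have := is_const_of_deriv_eq_zero (fun y => (hconst y).differentiableAt)
    (fun y => (hconst y).deriv) x 0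
  simp only [mul_zero, neg_zero, exp_zero, mul_one] at this
  rw [← this, mul_assoc, ← exp_add, neg_add_cancel, exp_zero, mul_one]

theorem eq_add_mul_of_deriv_deriv_eq_zero {f : ℝ → ℝ} (hf : ContDiff ℝ 2 f)
    (hode : ∀ x, deriv (deriv f) x = 0) (x : ℝ) : f x = f 0 + deriv f 0 * x := by
  have hf' : ∀ y, deriv f y = deriv f 0 := fun y => by
    have := eq_mul_exp_of_deriv_eq_mul hf.differentiable_deriv_two
      (fun y => by rw [hode, zero_mul]) y
    rwa [zero_mul, exp_zero, mul_one] at this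
  have hconst : ∀ y, HasDerivAt (fun y => f y - deriv f 0 * y) 0 y := fun y => by
    have := (hf.differentiable two_ne_zero y).hasDerivAt.fun_sub
      ((hasDerivAt_id y).const_mul (deriv f 0))
    rwa [hf' y, mul_one, sub_self] at this
  have := is_const_of_deriv_eq_zero (fun y => (hconst y).differentiableAt)
    (fun y => (hconst y).deriv) x 0
  simp only [mul_zero, sub_zero] at this
  linarith

theorem eq_mul_cosh_add_mul_sinh {f : ℝ → ℝ} {μ : ℝ} (hμ : μ ≠ 0) (hf : ContDiff ℝ 2 f)
    (hode : ∀ x, deriv (deriv f) x = μ ^ 2 * f x) (x : ℝ) :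
    f x = f 0 * cosh (μ * x) + deriv f 0 / μ * sinh (μ * x) := by
  have hf1 y := (hf.differentiable two_ne_zero y).hasDerivAt
  have hf2 y := (hf.differentiable_deriv_two y).hasDerivAt
  have hplus := eq_mul_exp_of_deriv_eq_mul (g := fun y => deriv f y + μ * f y) (c := μ)
    (fun y => ((hf2 y).fun_add ((hf1 y).const_mul μ)).differentiableAt)
    (fun y => by rw [((hf2 y).fun_add ((hf1 y).const_mul μ)).deriv, hode]; ring) x
  have hminus := eq_mul_exp_of_deriv_eq_mul (g := fun y => deriv f y - μ * f y) (c := -μ)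
    (fun y => ((hf2 y).fun_sub ((hf1 y).const_mul μ)).differentiableAt)
    (fun y => by rw [((hf2 y).fun_sub ((hf1 y).const_mul μ)).deriv, hode]; ring) x
  simp only [neg_mul] at hplus hminus
  rw [cosh_eq, sinh_eq]
  field_simp
  linear_combination hplus - hminus

theorem integral_sinh_mul_sub_sq {μ : ℝ} (hμ : μ ≠ 0) (a : ℝ) :
    ∫ x in (0 : ℝ)..a, sinh (μ * (a - x)) ^ 2 =
      (sinh (μ * a) * cosh (μ * a) - μ * a) / (2 * μ) := by
  have hu y : HasDerivAt (fun x => μ * (a - x)) (-μ) y := by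
    simpa using ((hasDerivAt_id y).const_sub a).const_mul μ
  have hF : ∀ y ∈ Set.uIcc 0 a, HasDerivAt
      (fun x => -(sinh (μ * (a - x)) * cosh (μ * (a - x)) + μ * x) / (2 * μ))
      (sinh (μ * (a - y)) ^ 2) y := fun y _ => by
    have := ((((hu y).sinh.fun_mul (hu y).cosh).fun_add
      ((hasDerivAt_id y).const_mul μ)).fun_neg).div_const (2 * μ)
    refine this.congr_deriv ?_
    rw [div_eq_iff (mul_ne_zero two_ne_zero hμ)]
    linear_combination μ * cosh_sq (μ * (a - y))
  rw [intervalIntegral.integral_eq_sub_of_hasDerivAt hF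
    (Continuous.intervalIntegrable (by fun_prop) _ _)]
  simp only [sub_self, mul_zero, sinh_zero, zero_mul, sub_zero]
  field_simp
  ring

theorem exists_mul_cosh_eq_mul_sinh {ε α : ℝ} (hε : 0 < ε) (hα : 4 / ε ≤ α) :
    ∃ k, 2 / ε ≤ k ∧ k * cosh (k * ε) = α * sinh (k * ε) := by
  have hcosh_two : cosh 2 ≤ 2 * sinh 2 := by
    have h3 : 3 ≤ exp 2 := by linarith [add_one_le_exp 2]
    have h1 : exp (-2) ≤ 1 := exp_le_one_iff.mpr (by norm_num)
    rw [cosh_eq, sinh_eq]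
    nlinarith
  have hleft : (2 / ε) * cosh (2 / ε * ε) - α * sinh (2 / ε * ε) ≤ 0 := by
    rw [div_mul_cancel₀ _ hε.ne']
    have h4 : 4 / ε * sinh 2 ≤ α * sinh 2 := by gcongr
    have h2 := mul_le_mul_of_nonneg_left hcosh_two (by positivity : (0 : ℝ) ≤ 2 / ε)
    linarith [show 2 / ε * (2 * sinh 2) = 4 / ε * sinh 2 by ring]
  have hright : 0 ≤ α * cosh (α * ε) - α * sinh (α * ε) := by
    rw [← mul_sub, cosh_sub_sinh]
    exact mul_nonneg ((by positivity : (0 : ℝ) ≤ 4 / ε).trans hα) (exp_pos _).le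
  obtain ⟨k, hk, hroot⟩ := intermediate_value_Icc (le_trans (by gcongr; norm_num) hα)
    (Continuous.continuousOn (f := fun k => k * cosh (k * ε) - α * sinh (k * ε)) (by fun_prop))
    ⟨hleft, hright⟩
  exact ⟨k, hk.1, sub_eq_zero.mp hroot⟩

theorem isRDEigen_neg_sq {ε α k : ℝ} (hε : 0 < ε) (hk : k ≠ 0)
    (hroot : k * cosh (k * ε) = α * sinh (k * ε)) : IsRDEigen ε α (-k ^ 2) := by
  have hu y : HasDerivAt (fun x => k * (ε - x)) (-k) y := by
    simpa using ((hasDerivAt_id y).const_sub ε).const_mul k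
  have hderiv : deriv (fun x => sinh (k * (ε - x))) = fun x => cosh (k * (ε - x)) * -k :=
    funext fun y => (hu y).sinh.deriv
  have hderiv2 y :
      deriv (deriv fun x => sinh (k * (ε - x))) y = sinh (k * (ε - y)) * -k * -k := by
    rw [hderiv]; exact ((hu y).cosh.mul_const (-k)).deriv
  refine ⟨fun x => sinh (k * (ε - x)), by fun_prop, ⟨0, ⟨le_rfl, hε.le⟩, ?_⟩, fun y => ?_, ?_, ?_⟩
  · simpa using ⟨hk, hε.ne'⟩
  · rw [hderiv2]; ring
  · simp only [hderiv, sub_zero]; linarith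
  · simp

theorem apply_mul_sinh_eq_of_apply_eq_zero {f : ℝ → ℝ} {ε μ : ℝ} (hμ : μ ≠ 0)
    (hf : ContDiff ℝ 2 f) (hode : ∀ x, deriv (deriv f) x = μ ^ 2 * f x) (hfε : f ε = 0)
    (x : ℝ) : f x * sinh (μ * ε) = f 0 * sinh (μ * (ε - x)) := by
  have hε := eq_mul_cosh_add_mul_sinh hμ hf hode ε
  rw [hfε] at hε
  rw [mul_sub, sinh_sub, eq_mul_cosh_add_mul_sinh hμ hf hode x]
  linear_combination (-sinh (μ * x)) * hε

theorem apply_zero_mul_sub_eq_zero_of_robin_dirichlet {f : ℝ → ℝ} {ε α μ : ℝ} (hμ : μ ≠ 0)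
    (hf : ContDiff ℝ 2 f) (hode : ∀ x, deriv (deriv f) x = μ ^ 2 * f x)
    (hrobin : deriv f 0 + α * f 0 = 0) (hfε : f ε = 0) :
    f 0 * (μ * cosh (μ * ε) - α * sinh (μ * ε)) = 0 := by
  have hε := eq_mul_cosh_add_mul_sinh hμ hf hode ε
  rw [hfε, eq_neg_of_add_eq_zero_left hrobin] at hε
  field_simp at hε
  linear_combination -hε

theorem robin_root_and_sq_apply_zero_of_normalized {f : ℝ → ℝ} {ε α μ : ℝ} (hμ : μ ≠ 0)
    (hε : ε ≠ 0) (hf : ContDiff ℝ 2 f) (hode : ∀ x, deriv (deriv f) x = μ ^ 2 * f x)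
    (hrobin : deriv f 0 + α * f 0 = 0) (hfε : f ε = 0)
    (hnorm : ∫ x in (0 : ℝ)..ε, f x ^ 2 = 1) :
    μ * cosh (μ * ε) = α * sinh (μ * ε) ∧
      f 0 ^ 2 * (sinh (μ * ε) * cosh (μ * ε) - μ * ε) = 2 * μ * sinh (μ * ε) ^ 2 := by
  have hs : sinh (μ * ε) ≠ 0 := sinh_ne_zero.mpr (mul_ne_zero hμ hε)
  have hnorm' : (f 0 / sinh (μ * ε)) ^ 2 *
      ((sinh (μ * ε) * cosh (μ * ε) - μ * ε) / (2 * μ)) = 1 := by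
    rw [← integral_sinh_mul_sub_sq hμ, ← intervalIntegral.integral_const_mul, ← hnorm]
    refine intervalIntegral.integral_congr fun x _ => ?_
    rw [div_pow, div_mul_eq_mul_div, ← mul_pow,
      ← apply_mul_sinh_eq_of_apply_eq_zero hμ hf hode hfε, mul_pow,
      mul_div_cancel_right₀ _ (pow_ne_zero 2 hs)]
  have hf0 : f 0 ≠ 0 := by
    intro h
    simp [h] at hnorm'
  refine ⟨?_, ?_⟩
  · have := apply_zero_mul_sub_eq_zero_of_robin_dirichlet hμ hf hode hrobin hfε
    linarith [(mul_eq_zero.mp this).resolve_left hf0]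
  · field_simp at hnorm'
    linear_combination hnorm'

theorem apply_eq_zero_of_robin_dirichlet_of_deriv_deriv_eq_zero {f : ℝ → ℝ} {ε α : ℝ}
    (hαε : α * ε ≠ 1) (hf : ContDiff ℝ 2 f) (hode : ∀ x, deriv (deriv f) x = 0)
    (hrobin : deriv f 0 + α * f 0 = 0) (hfε : f ε = 0) (x : ℝ) : f x = 0 := by
  have hf' : deriv f 0 = -(α * f 0) := eq_neg_of_add_eq_zero_left hrobin
  have hf0 : f 0 = 0 := by
    have h := eq_add_mul_of_deriv_deriv_eq_zero hf hode ε
    rw [hfε, hf'] at h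
    have : f 0 * (1 - α * ε) = 0 := by linear_combination -h
    exact (mul_eq_zero.mp this).resolve_right (sub_ne_zero.mpr hαε.symm)
  rw [eq_add_mul_of_deriv_deriv_eq_zero hf hode x, hf', hf0]
  ring

theorem abs_sub_two_mul_le_of_robin_root {ε α μ b : ℝ} (hε : 0 < ε) (ht : 2 ≤ μ * ε)
    (hroot : μ * cosh (μ * ε) = α * sinh (μ * ε))
    (hb : b * (sinh (μ * ε) * cosh (μ * ε) - μ * ε) = 2 * μ * sinh (μ * ε) ^ 2) :
    |b - 2 * α| ≤ 4 / ε := by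
  set s := sinh (μ * ε)
  set c := cosh (μ * ε)
  have hts : μ * ε ≤ s := self_le_sinh_iff.mpr (by linarith)
  have hsc : s < c := by linarith [cosh_sub_sinh (μ * ε), exp_pos (-(μ * ε))]
  have hsc_sub : s * c / 2 ≤ s * c - μ * ε := by nlinarith
  have hD : 0 < s * (s * c - μ * ε) := by nlinarith
  have hnum : 0 ≤ μ * ε * c - s := by nlinarith
  have hD' : 0 < ε * (s * (s * c - μ * ε)) := mul_pos hε hD
  have hbound : 2 * (μ * ε) * (μ * ε * c - s) ≤ 4 * (s * (s * c - μ * ε)) := by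
    nlinarith [mul_le_mul hts hts (by linarith) (by linarith : 0 ≤ s)]
  have hdiff : b - 2 * α = 2 * (μ * ε) * (μ * ε * c - s) / (ε * (s * (s * c - μ * ε))) := by
    rw [eq_div_iff hD'.ne']
    linear_combination ε * s * hb + 2 * ε * (s * c - μ * ε) * hroot
      - 2 * (μ * ε) * s * cosh_sq (μ * ε)
  rw [hdiff, abs_of_nonneg (div_nonneg (mul_nonneg (by linarith) hnum) hD'.le),
    div_le_div_iff₀ hD' hε]
  linarith [mul_le_mul_of_nonneg_right hbound hε.le]

/-- The `L²`-normalized eigenfunction `f` associated with the first eigenvalue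
`E₁(S) = inf` of the eigenvalue set satisfies `|f(0)|² = 2α + O(1)` as `α → +∞`. -/
theorem stmt_6 (ε : ℝ) (hε : 0 < ε) :
    ∃ α₀ K : ℝ, 0 < α₀ ∧ 0 < K ∧ ∀ α ≥ α₀, ∀ f : ℝ → ℝ,
      ContDiff ℝ 2 f →
      (∀ x, deriv (deriv f) x = - (sInf {lam | IsRDEigen ε α lam}) * f x) →
      deriv f 0 + α * f 0 = 0 → f ε = 0 →
      (∫ x in (0:ℝ)..ε, (f x) ^ 2) = 1 →
      |(f 0) ^ 2 - 2 * α| ≤ K := by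
  refine ⟨4 / ε, 4 / ε, by positivity, by positivity, fun α hα f hf hode hrobin hfε hnorm => ?_⟩
  obtain ⟨k, hk, hroot⟩ := exists_mul_cosh_eq_mul_sinh hε hα
  have hk0 : 0 < k := (by positivity : 0 < 2 / ε).trans_le hk
  by_cases hbdd : BddBelow {lam | IsRDEigen ε α lam}
  · have hle := csInf_le hbdd (isRDEigen_neg_sq hε hk0.ne' hroot)
    set μ := √(-sInf {lam | IsRDEigen ε α lam})
    have hkμ : k ≤ μ := le_sqrt_of_sq_le (by linarith)
    have hμ : 0 < μ := hk0.trans_le hkμ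
    have hode' x : deriv (deriv f) x = μ ^ 2 * f x := by
      rw [hode, sq_sqrt (by nlinarith)]
    obtain ⟨hroot', hb⟩ := robin_root_and_sq_apply_zero_of_normalized hμ.ne' hε.ne' hf hode'
      hrobin hfε hnorm
    have ht : 2 ≤ μ * ε := by
      rw [div_le_iff₀ hε] at hk
      nlinarith
    exact abs_sub_two_mul_le_of_robin_root hε ht hroot' hb
  · have hαε : α * ε ≠ 1 := by
      rw [ge_iff_le, div_le_iff₀ hε] at hα
      linarith
    rw [Real.sInf_of_not_bddBelow hbdd] at hode
    have hzero := apply_eq_zero_of_robin_dirichlet_of_deriv_deriv_eq_zero hαε hf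
      (fun x => by rw [hode, neg_zero, zero_mul]) hrobin hfε
    simp [hzero] at hnorm
end
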